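/- arXiv:2402.10815 — 2 statements merged into one kernel-verified Lean document; each statement's English description precedes it below -/
import Mathlib

section
/- Let (G,w) be an ASHG and let M ⊆ E(G) be a matching such that w(e) > 0 for every e ∈ M, and such that for every edge uv ∈ E(G) with w(uv) > 0 and uv ∉ M there exists an edge e ∈ M incident to u or to v with w(e) ≥ w(uv). Then the partition of V(G) whose parts are the pairs {u,v} for uv ∈ M together with singletons for all unmatched vertices is 2-core stable. -/
open Finset

noncomputable section
open scoped Classical

variable {V : Type*}

/-- The utility of agent `u` in the coalition `X`: the sum of the weights of the
edges joining `u` to members of `X`. -/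
def ut (G : SimpleGraph V) (w : V → V → ℚ) (X : Finset V) (u : V) : ℚ :=
  ∑ v ∈ X.filter (fun v => G.Adj u v), w u v

/-- `P` encodes a partition of the vertex set: `P u` is the part containing `u`. -/
def IsPartitionFun (P : V → Finset V) : Prop :=
  (∀ u, u ∈ P u) ∧ ∀ u v, v ∈ P u → P v = P u

/-- `X` is a blocking coalition for the partition `P`. -/
def Blocking (G : SimpleGraph V) (w : V → V → ℚ) (P : V → Finset V)
    (X : Finset V) : Prop :=
  X.Nonempty ∧ ∀ u ∈ X, ut G w (P u) u < ut G w X u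

/-- The partition `P` is core stable: it admits no blocking coalition. -/
def CoreStable (G : SimpleGraph V) (w : V → V → ℚ) (P : V → Finset V) : Prop :=
  ∀ X : Finset V, ¬ Blocking G w P X

/-- The partition `P` is `k`-core stable: it admits no blocking coalition of size at most `k`. -/
def KCoreStable (k : ℕ) (G : SimpleGraph V) (w : V → V → ℚ) (P : V → Finset V) : Prop :=
  ∀ X : Finset V, X.card ≤ k → ¬ Blocking G w P X

lemma ut_singleton (G : SimpleGraph V) (w : V → V → ℚ) (u : V) :
    ut G w {u} u = 0 := by
  simp [ut, Finset.filter_singleton, fun h => G.irrefl h]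

lemma ut_pair (G : SimpleGraph V) (w : V → V → ℚ) {u v : V} (hadj : G.Adj u v) :
    ut G w {u, v} u = w u v := by
  have hne : u ≠ v := hadj.ne
  simp [ut, Finset.filter_insert, Finset.filter_singleton, fun h => G.irrefl h, hadj]

lemma ut_pair_notadj (G : SimpleGraph V) (w : V → V → ℚ) {u v : V}
    (hadj : ¬ G.Adj u v) :
    ut G w {u, v} u = 0 := by
  simp [ut, Finset.filter_insert, Finset.filter_singleton, fun h => G.irrefl h, hadj]

lemma ut_part_nonneg (G : SimpleGraph V) (w : V → V → ℚ)
    (M : V → V → Prop)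
    (hMedge : ∀ u v, M u v → G.Adj u v)
    (hMpos : ∀ u v, M u v → 0 < w u v)
    (P : V → Finset V)
    (hPpair : ∀ u v, M u v → P u = {u, v})
    (hPsingle : ∀ u, (∀ v, ¬ M u v) → P u = {u}) (u : V) :
    0 ≤ ut G w (P u) u := by
  by_cases h : ∃ v, M u v
  · obtain ⟨v, hv⟩ := h
    rw [hPpair u v hv, ut_pair G w (hMedge u v hv)]
    exact (hMpos u v hv).le
  · push_neg at h
    rw [hPsingle u h, ut_singleton]

/-- a matching of positive-weight edges that "dominates" every positive
edge yields a 2-core stable partition (pairs of the matching together with singletons). -/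
theorem matching_gives_two_core_stable [Fintype V] (G : SimpleGraph V) (w : V → V → ℚ)
    (hw : ∀ u v, w u v = w v u)
    (M : V → V → Prop)
    (hMsymm : ∀ u v, M u v → M v u)
    (hMedge : ∀ u v, M u v → G.Adj u v)
    (hMpos : ∀ u v, M u v → 0 < w u v)
    (hMmatching : ∀ u v v', M u v → M u v' → v = v')
    (hMdom : ∀ u v, G.Adj u v → 0 < w u v → ¬ M u v →
      ∃ a b, M a b ∧ (a = u ∨ a = v) ∧ w u v ≤ w a b)
    (P : V → Finset V) (hP : IsPartitionFun P)
    (hPpair : ∀ u v, M u v → P u = {u, v})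
    (hPsingle : ∀ u, (∀ v, ¬ M u v) → P u = {u}) :
    KCoreStable 2 G w P := by
  intro X hcard ⟨hne, hblk⟩
  have hnn := ut_part_nonneg G w M hMedge hMpos P hPpair hPsingle
  have h12 : X.card = 1 ∨ X.card = 2 := by
    have := Finset.card_pos.mpr hne; omega
  rcases h12 with h1 | h2
  · obtain ⟨u, rfl⟩ := Finset.card_eq_one.mp h1
    have := hblk u (Finset.mem_singleton_self u)
    rw [ut_singleton] at this
    exact absurd this (not_lt.mpr (hnn u))
  · obtain ⟨u, v, huv, rfl⟩ := Finset.card_eq_two.mp h2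
    have hu := hblk u (by simp)
    have hv := hblk v (by simp)
    by_cases hadj : G.Adj u v
    · rw [ut_pair G w hadj] at hu
      have hcomm : ({u, v} : Finset V) = {v, u} := by
        ext x; simp [or_comm]
      rw [hcomm, ut_pair G w hadj.symm] at hv
      have hwpos : 0 < w u v := lt_of_le_of_lt (hnn u) hu
      by_cases hM : M u v
      · rw [hPpair u v hM, ut_pair G w hadj] at hu
        exact absurd hu (lt_irrefl _)
      · obtain ⟨a, b, hab, hor, hle⟩ := hMdom u v hadj hwpos hM
        rcases hor with rfl | rfl
        · rw [hPpair a b hab, ut_pair G w (hMedge a b hab)] at hu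
          linarith
        · rw [hPpair a b hab, ut_pair G w (hMedge a b hab)] at hv
          have := hw u a
          linarith
    · rw [ut_pair_notadj G w hadj] at hu
      exact absurd hu (not_lt.mpr (hnn u))
end
end

section
/- Let G be a finite simple graph and let Δ* ≥ 0 and s ≥ 1 be integers. Construct an ASHG (G',w') as follows: every edge of G receives weight −1; add two new vertices x, x'; add s(Δ*+1) − 1 new vertices, each joined to both x and x' by edges of weight 1; for each u ∈ V(G) add Δ*+1 new vertices u_1,...,u_{Δ*+1}, each joined to x and to u by edges of weight 1; and attach to each u_i a new leaf u_i' joined to u_i by an edge of weight 1. Let 𝒫 be the partition consisting of: the part containing x, x' and their s(Δ*+1)−1 common neighbours; the pairs {u_i, u_i'} for all u ∈ V(G) and i ∈ {1,...,Δ*+1}; and singletons for all vertices of G. Then 𝒫 admits a blocking coalition if and only if G contains a set S of at least s vertices such that the induced subgraph G[S] has maximum degree at most Δ*. -/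
open Finset

noncomputable section
open scoped Classical

variable {V : Type*}

/-- The vertices of the Bounded Degree Deletion gadget:
`orig a` are the vertices of `G`, `x`, `x'`, the common neighbours `c j`,
the vertices `u a i` and the leaves `u' a i`. -/
inductive BDVtx (V : Type*) (D s : ℕ) : Type _
  | orig : V → BDVtx V D s
  | x : BDVtx V D s
  | x' : BDVtx V D s
  | c : Fin (s * (D + 1) - 1) → BDVtx V D s
  | u : V → Fin (D + 1) → BDVtx V D s
  | u' : V → Fin (D + 1) → BDVtx V D s
  deriving DecidableEq, Fintype

/-- The weight function of the Bounded Degree Deletion gadget (`0` on non-edges). -/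
def w11 {V : Type*} (G : SimpleGraph V) (D s : ℕ) :
    BDVtx V D s → BDVtx V D s → ℚ
  | BDVtx.orig a, BDVtx.orig b => if G.Adj a b then -1 else 0
  | BDVtx.c _, BDVtx.x => 1
  | BDVtx.x, BDVtx.c _ => 1
  | BDVtx.c _, BDVtx.x' => 1
  | BDVtx.x', BDVtx.c _ => 1
  | BDVtx.u _ _, BDVtx.x => 1
  | BDVtx.x, BDVtx.u _ _ => 1
  | BDVtx.u b _, BDVtx.orig a => if a = b then 1 else 0
  | BDVtx.orig a, BDVtx.u b _ => if a = b then 1 else 0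
  | BDVtx.u' b i, BDVtx.u b' i' => if b = b' ∧ i = i' then 1 else 0
  | BDVtx.u b i, BDVtx.u' b' i' => if b = b' ∧ i = i' then 1 else 0
  | _, _ => 0

/-- The initial partition: `x`, `x'` and their common neighbours together; each
`u a i` with its leaf `u' a i`; all vertices of `G` as singletons. -/
def P11 {V : Type*} [Fintype V] (D s : ℕ) : BDVtx V D s → Finset (BDVtx V D s)
  | BDVtx.orig a => {BDVtx.orig a}
  | BDVtx.x => insert BDVtx.x (insert BDVtx.x' (univ.image BDVtx.c))
  | BDVtx.x' => insert BDVtx.x (insert BDVtx.x' (univ.image BDVtx.c))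
  | BDVtx.c _ => insert BDVtx.x (insert BDVtx.x' (univ.image BDVtx.c))
  | BDVtx.u a i => {BDVtx.u a i, BDVtx.u' a i}
  | BDVtx.u' a i => {BDVtx.u a i, BDVtx.u' a i}

/-!
In the gadget a leaf `u' a i`, a common neighbour `c j` and `x'` can never strictly gain, so a
blocking coalition `X` avoids them. Then each `u a i ∈ X` needs both `x` and `orig a` in `X`;
`x` is forced into `X` and gains only from the `u a i`, at most `D + 1` for each `a` with
`orig a ∈ X`, so it beats its `s (D + 1) - 1` exactly when at least `s` such `a` occur. A vertex
`orig a` gains one per `u a i` and loses one per neighbour in `X`, which bounds its degree by `D`.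
Conversely `x`, a set `S` of vertices of `G` and all `u a i` with `a ∈ S` block.
-/

theorem ut_fromRel_ne_zero {α : Type*} (w : α → α → ℚ) (hw : ∀ a, w a a = 0)
    (X : Finset α) (a : α) :
    ut (SimpleGraph.fromRel fun u v => w u v ≠ 0) w X a = ∑ v ∈ X, w a v := by
  rw [ut]
  convert sum_filter_of_ne fun v _ hv => ?_
  rw [SimpleGraph.fromRel_adj]
  exact ⟨fun hav => hv (hav ▸ hw a), Or.inl hv⟩

theorem sum_boole_mem_image {ι β : Type*} [Fintype ι] [DecidableEq β] {f : ι → β}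
    (hf : f.Injective) (t : Set ι) (X : Finset β) :
    ∑ v ∈ X, (if v ∈ f '' t then (1 : ℚ) else 0) = #{i | f i ∈ X ∧ i ∈ t} := by
  rw [sum_boole, Nat.cast_inj]
  symm
  refine card_nbij f (fun i hi => ?_) hf.injOn fun v hv => ?_
  · simp only [coe_filter, mem_univ, true_and, Set.mem_ofPred_eq] at hi ⊢
    exact ⟨hi.1, i, hi.2, rfl⟩
  · simp only [coe_filter, Set.mem_ofPred_eq] at hv
    obtain ⟨hvX, i, hi, rfl⟩ := hv
    exact ⟨i, by simpa using ⟨hvX, hi⟩, rfl⟩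

theorem sum_boole_mem_range {ι β : Type*} [Fintype ι] [DecidableEq β] {f : ι → β}
    (hf : f.Injective) (X : Finset β) :
    ∑ v ∈ X, (if v ∈ Set.range f then (1 : ℚ) else 0) = #{i | f i ∈ X} := by
  simpa [Set.image_univ] using sum_boole_mem_image hf Set.univ X

namespace BDVtx

abbrev graph (G : SimpleGraph V) (D s : ℕ) : SimpleGraph (BDVtx V D s) :=
  SimpleGraph.fromRel fun u v => w11 G D s u v ≠ 0

variable (G : SimpleGraph V) {D s : ℕ}

theorem c_injective : (c : Fin (s * (D + 1) - 1) → BDVtx V D s).Injective :=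
  fun _ _ h => c.inj h

theorem u_injective (a : V) : (u a : Fin (D + 1) → BDVtx V D s).Injective :=
  fun _ _ h => (u.inj h).2

theorem u_uncurry_injective : (Function.uncurry u : V × Fin (D + 1) → BDVtx V D s).Injective :=
  fun _ _ h => Prod.ext (u.inj h).1 (u.inj h).2

theorem orig_injective : (orig : V → BDVtx V D s).Injective :=
  fun _ _ h => orig.inj h

theorem w11_self (a : BDVtx V D s) : w11 G D s a a = 0 := by
  cases a <;> simp [w11]

theorem sum_w11_x' (X : Finset (BDVtx V D s)) :
    ∑ v ∈ X, w11 G D s x' v = #{j | c j ∈ X} := by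
  have hw : ∀ v, w11 G D s x' v = if v ∈ Set.range c then 1 else 0 := by
    intro v; cases v <;> simp [w11]
  simp only [hw, sum_boole_mem_range c_injective]

theorem sum_w11_c (j : Fin (s * (D + 1) - 1)) (X : Finset (BDVtx V D s)) :
    ∑ v ∈ X, w11 G D s (c j) v = (if x ∈ X then 1 else 0) + (if x' ∈ X then 1 else 0) := by
  have hw : ∀ v, w11 G D s (c j) v = (if v = x then 1 else 0) + (if v = x' then 1 else 0) := by
    intro v; cases v <;> simp [w11]
  simp only [hw, sum_add_distrib, sum_ite_eq']

theorem sum_w11_u (a : V) (i : Fin (D + 1)) (X : Finset (BDVtx V D s)) :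
    ∑ v ∈ X, w11 G D s (u a i) v = (if x ∈ X then 1 else 0) + (if orig a ∈ X then 1 else 0)
      + (if u' a i ∈ X then 1 else 0) := by
  have hw : ∀ v, w11 G D s (u a i) v = (if v = x then 1 else 0) + (if v = orig a then 1 else 0)
      + (if v = u' a i then 1 else 0) := by
    intro v; cases v <;> simp [w11, eq_comm]
  simp only [hw, sum_add_distrib, sum_ite_eq']

theorem sum_w11_u' (a : V) (i : Fin (D + 1)) (X : Finset (BDVtx V D s)) :
    ∑ v ∈ X, w11 G D s (u' a i) v = if u a i ∈ X then 1 else 0 := by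
  have hw : ∀ v, w11 G D s (u' a i) v = if v = u a i then 1 else 0 := by
    intro v; cases v <;> simp [w11, eq_comm]
  simp only [hw, sum_ite_eq']

def coalitionOf (S : Finset V) : Finset (BDVtx V D s) :=
  insert x (S.image orig ∪ (S ×ˢ univ).image (Function.uncurry u))

section coalitionOf

variable {S : Finset V}

@[simp] theorem x_mem_coalitionOf : x ∈ (coalitionOf S : Finset (BDVtx V D s)) := by
  simp [coalitionOf]

@[simp] theorem x'_notMem_coalitionOf : x' ∉ (coalitionOf S : Finset (BDVtx V D s)) := by
  simp [coalitionOf]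

@[simp] theorem c_notMem_coalitionOf (j : Fin (s * (D + 1) - 1)) :
    c j ∉ (coalitionOf S : Finset (BDVtx V D s)) := by
  simp [coalitionOf]

@[simp] theorem orig_mem_coalitionOf {a : V} :
    orig a ∈ (coalitionOf S : Finset (BDVtx V D s)) ↔ a ∈ S := by
  simp [coalitionOf]

@[simp] theorem u_mem_coalitionOf {a : V} {i : Fin (D + 1)} :
    u a i ∈ (coalitionOf S : Finset (BDVtx V D s)) ↔ a ∈ S := by
  simp [coalitionOf]

@[simp] theorem u'_notMem_coalitionOf (a : V) (i : Fin (D + 1)) :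
    u' a i ∉ (coalitionOf S : Finset (BDVtx V D s)) := by
  simp [coalitionOf]

end coalitionOf

variable [Fintype V]

theorem sum_w11_x (X : Finset (BDVtx V D s)) :
    ∑ v ∈ X, w11 G D s x v = #{j | c j ∈ X} + #{p : V × Fin (D + 1) | u p.1 p.2 ∈ X} := by
  have hw : ∀ v, w11 G D s x v = (if v ∈ Set.range c then 1 else 0)
      + (if v ∈ Set.range (Function.uncurry u) then 1 else 0) := by
    intro v; cases v <;> simp [w11]
  simp only [hw, sum_add_distrib, sum_boole_mem_range c_injective,
    sum_boole_mem_range u_uncurry_injective]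
  rfl

theorem sum_w11_orig (a : V) (X : Finset (BDVtx V D s)) :
    ∑ v ∈ X, w11 G D s (orig a) v = #{i | u a i ∈ X} - #{b | orig b ∈ X ∧ G.Adj a b} := by
  have hw : ∀ v, w11 G D s (orig a) v = (if v ∈ Set.range (u a) then 1 else 0)
      - (if v ∈ orig '' {b | G.Adj a b} then 1 else 0) := by
    intro v; cases v <;> simp only [w11] <;> split_ifs <;> simp_all
  simp only [hw, sum_sub_distrib, sum_boole_mem_range (u_injective a),
    sum_boole_mem_image orig_injective, Set.mem_ofPred_eq]

theorem sum_w11_P11_x : ∑ v ∈ P11 D s x, w11 G D s x v = (s * (D + 1) - 1 : ℕ) := by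
  rw [sum_w11_x]; simp [P11]

theorem sum_w11_P11_x' : ∑ v ∈ P11 D s x', w11 G D s x' v = (s * (D + 1) - 1 : ℕ) := by
  rw [sum_w11_x']; simp [P11]

theorem sum_w11_P11_c (j : Fin (s * (D + 1) - 1)) :
    ∑ v ∈ P11 D s (c j), w11 G D s (c j) v = 2 := by
  rw [sum_w11_c]; norm_num [P11]

theorem sum_w11_P11_u (a : V) (i : Fin (D + 1)) :
    ∑ v ∈ P11 D s (u a i), w11 G D s (u a i) v = 1 := by
  rw [sum_w11_u]; simp [P11]

theorem sum_w11_P11_u' (a : V) (i : Fin (D + 1)) :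
    ∑ v ∈ P11 D s (u' a i), w11 G D s (u' a i) v = 1 := by
  rw [sum_w11_u']; simp [P11]

theorem sum_w11_P11_orig (a : V) : ∑ v ∈ P11 D s (orig a), w11 G D s (orig a) v = 0 := by
  rw [sum_w11_orig]; simp [P11]

variable {G} {X : Finset (BDVtx V D s)}

theorem sum_lt_of_blocking (hX : Blocking (graph G D s) (w11 G D s) (P11 D s) X)
    {a : BDVtx V D s} (ha : a ∈ X) :
    ∑ v ∈ P11 D s a, w11 G D s a v < ∑ v ∈ X, w11 G D s a v := by
  simpa only [ut_fromRel_ne_zero _ (w11_self G)] using hX.2 a ha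

section Blocking

variable (hX : Blocking (graph G D s) (w11 G D s) (P11 D s) X)
include hX

theorem u'_notMem_of_blocking (a : V) (i : Fin (D + 1)) : u' a i ∉ X := fun h => by
  have := sum_lt_of_blocking hX h
  rw [sum_w11_P11_u', sum_w11_u'] at this
  split_ifs at this <;> norm_num at this

theorem c_notMem_of_blocking (j : Fin (s * (D + 1) - 1)) : c j ∉ X := fun h => by
  have := sum_lt_of_blocking hX h
  rw [sum_w11_P11_c, sum_w11_c] at this
  split_ifs at this <;> norm_num at this

theorem x'_notMem_of_blocking : x' ∉ X := fun h => by
  have := sum_lt_of_blocking hX h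
  rw [sum_w11_P11_x', sum_w11_x', filter_false_of_mem fun j _ => c_notMem_of_blocking hX j,
    card_empty, Nat.cast_zero] at this
  exact (Nat.cast_nonneg _).not_gt this

theorem x_mem_and_orig_mem_of_blocking {a : V} {i : Fin (D + 1)} (h : u a i ∈ X) :
    x ∈ X ∧ orig a ∈ X := by
  have := sum_lt_of_blocking hX h
  rw [sum_w11_P11_u, sum_w11_u, if_neg (u'_notMem_of_blocking hX a i)] at this
  split_ifs at this with hx ho <;> norm_num at this
  exact ⟨hx, ho⟩

theorem card_adj_lt_of_blocking {a : V} (h : orig a ∈ X) :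
    #{b | orig b ∈ X ∧ G.Adj a b} < #{i | u a i ∈ X} := by
  have := sum_lt_of_blocking hX h
  rw [sum_w11_P11_orig, sum_w11_orig, sub_pos] at this
  exact_mod_cast this

theorem x_mem_of_blocking : x ∈ X := by
  obtain ⟨v, hv⟩ := hX.1
  cases v with
  | orig a =>
    obtain ⟨i, hi⟩ := card_pos.1 (card_adj_lt_of_blocking hX hv).pos
    exact (x_mem_and_orig_mem_of_blocking hX (mem_filter.1 hi).2).1
  | x => exact hv
  | x' => exact absurd hv (x'_notMem_of_blocking hX)
  | c j => exact absurd hv (c_notMem_of_blocking hX j)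
  | u a i => exact (x_mem_and_orig_mem_of_blocking hX hv).1
  | u' a i => exact absurd hv (u'_notMem_of_blocking hX a i)

theorem card_u_le_of_blocking :
    #{p : V × Fin (D + 1) | u p.1 p.2 ∈ X} ≤ #{a | orig a ∈ X} * (D + 1) := by
  calc #{p : V × Fin (D + 1) | u p.1 p.2 ∈ X}
      ≤ #(({a | orig a ∈ X} : Finset V) ×ˢ (univ : Finset (Fin (D + 1)))) := by
        refine card_le_card fun p hp => ?_
        have := (x_mem_and_orig_mem_of_blocking hX (mem_filter.1 hp).2).2
        simpa using this
    _ = #{a | orig a ∈ X} * (D + 1) := by rw [card_product, card_univ, Fintype.card_fin]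

theorem le_card_orig_of_blocking : s ≤ #{a | orig a ∈ X} := by
  have := sum_lt_of_blocking hX (x_mem_of_blocking hX)
  rw [sum_w11_P11_x, sum_w11_x, filter_false_of_mem fun j _ => c_notMem_of_blocking hX j,
    card_empty, Nat.cast_zero, zero_add, Nat.cast_lt] at this
  have := this.trans_le (card_u_le_of_blocking hX)
  exact Nat.le_of_mul_le_mul_right (c := D + 1) (by omega) (by omega)

theorem card_adj_le_of_blocking {a : V} (h : orig a ∈ X) :
    #{b | orig b ∈ X ∧ G.Adj a b} ≤ D := by
  have := (card_adj_lt_of_blocking hX h).trans_le (card_le_univ _)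
  rwa [Fintype.card_fin, Nat.lt_succ_iff] at this

end Blocking

theorem exists_bounded_degree_of_blocking
    (hX : Blocking (graph G D s) (w11 G D s) (P11 D s) X) :
    ∃ S : Finset V, s ≤ #S ∧ ∀ a ∈ S, #(S.filter (G.Adj a)) ≤ D := by
  refine ⟨({a | orig a ∈ X} : Finset V), le_card_orig_of_blocking hX, fun a ha => ?_⟩
  rw [filter_filter]
  exact card_adj_le_of_blocking hX (mem_filter.1 ha).2

theorem blocking_coalitionOf (hs : 1 ≤ s) {S : Finset V} (hS : s ≤ #S)
    (hdeg : ∀ a ∈ S, #(S.filter (G.Adj a)) ≤ D) :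
    Blocking (graph G D s) (w11 G D s) (P11 D s) (coalitionOf S) := by
  set X : Finset (BDVtx V D s) := coalitionOf S with hXdef
  refine ⟨⟨x, x_mem_coalitionOf⟩, fun v hv => ?_⟩
  rw [ut_fromRel_ne_zero _ (w11_self G), ut_fromRel_ne_zero _ (w11_self G)]
  cases v with
  | orig a =>
    have ha : a ∈ S := orig_mem_coalitionOf.1 hv
    have hadj : ({b | orig b ∈ X ∧ G.Adj a b} : Finset V) = S.filter (G.Adj a) := by
      ext; simp [hXdef]
    have hu : ({i | u a i ∈ X} : Finset (Fin (D + 1))) = univ := by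
      ext; simp [hXdef, ha]
    rw [sum_w11_P11_orig, sum_w11_orig, sub_pos, hadj, hu, card_univ, Fintype.card_fin,
      Nat.cast_lt, Nat.lt_succ_iff]
    exact hdeg a ha
  | x =>
    have hu : ({p : V × Fin (D + 1) | u p.1 p.2 ∈ X} : Finset _) = S ×ˢ univ := by
      ext; simp [hXdef]
    rw [sum_w11_P11_x, sum_w11_x, filter_false_of_mem fun j _ => c_notMem_coalitionOf j, hu,
      card_empty, card_product, card_univ, Fintype.card_fin, Nat.cast_zero, zero_add, Nat.cast_lt]
    have hmul := Nat.mul_le_mul_right (D + 1) hS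
    have hpos : 1 ≤ s * (D + 1) := Nat.mul_pos hs D.succ_pos
    omega
  | u a i =>
    rw [sum_w11_P11_u, sum_w11_u]
    simp_all
  | x' | c _ | u' _ _ => simp [hXdef] at hv

end BDVtx

/-- the Bounded Degree Deletion gadget admits a blocking coalition iff
`G` has at least `s` vertices inducing a subgraph of maximum degree at most `D`. -/
theorem bounded_degree_deletion_gadget (V : Type*) [Fintype V]
    (G : SimpleGraph V) (D s : ℕ) (hs : 1 ≤ s) :
    (∃ X : Finset (BDVtx V D s),
        Blocking (SimpleGraph.fromRel fun u v => w11 G D s u v ≠ 0)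
          (w11 G D s) (P11 D s) X)
      ↔ ∃ S : Finset V, s ≤ S.card ∧
          ∀ a ∈ S, (S.filter (fun b => G.Adj a b)).card ≤ D := by
  constructor
  · rintro ⟨X, hX⟩
    exact BDVtx.exists_bounded_degree_of_blocking hX
  · rintro ⟨S, hS, hdeg⟩
    exact ⟨_, BDVtx.blocking_coalitionOf hs hS hdeg⟩
end
end
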